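/- (Pinsker's inequality, finite case) For probability mass functions p, q on a finite type with q(y) > 0 whenever p(y) > 0, the total variation distance satisfies TV(p,q) ≤ sqrt(2·D_KL(p‖q)), where D_KL(p‖q) = ∑_y p(y)·log(p(y)/q(y)). -/
import Mathlib

lemma ptwise (x y : ℝ) (hx : 0 ≤ x) (hy : 0 ≤ y) (h : 0 < x → 0 < y) :
    (x - y)^2 / (4*(x+y)) ≤ x * Real.log (x / y) - (x - y) := by
  rcases eq_or_lt_of_le hy with hy0 | hy
  · have hx0 : x = 0 := by
      by_contra hc
      exact absurd (h (lt_of_le_of_ne hx (Ne.symm hc))) (by rw [← hy0]; exact lt_irrefl 0)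
    simp [hx0, ← hy0]
  rcases eq_or_lt_of_le hx with hx0 | hx
  · rw [← hx0]
    have h4 : (0:ℝ) < 4 * (0 + y) := by linarith
    rw [div_le_iff₀ h4, zero_mul]
    nlinarith [sq_nonneg y]
  · -- main case: x, y > 0
    have hsx : (0:ℝ) < Real.sqrt x := Real.sqrt_pos.mpr hx
    have hsy : (0:ℝ) < Real.sqrt y := Real.sqrt_pos.mpr hy
    have hsx2 : Real.sqrt x ^ 2 = x := Real.sq_sqrt hx.le
    have hsy2 : Real.sqrt y ^ 2 = y := Real.sq_sqrt hy.le
    have hlog : Real.log (x / y) = 2 * Real.log (Real.sqrt x / Real.sqrt y) := by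
      rw [Real.log_div (ne_of_gt hx) (ne_of_gt hy),
        Real.log_div (ne_of_gt hsx) (ne_of_gt hsy),
        Real.log_sqrt hx.le, Real.log_sqrt hy.le]
      ring
    have hlb : 1 - Real.sqrt y / Real.sqrt x ≤ Real.log (Real.sqrt x / Real.sqrt y) := by
      have hinv : Real.log (Real.sqrt y / Real.sqrt x) ≤ Real.sqrt y / Real.sqrt x - 1 :=
        Real.log_le_sub_one_of_pos (div_pos hsy hsx)
      have hneg : Real.log (Real.sqrt x / Real.sqrt y)
          = - Real.log (Real.sqrt y / Real.sqrt x) := by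
        rw [Real.log_div (ne_of_gt hsx) (ne_of_gt hsy),
          Real.log_div (ne_of_gt hsy) (ne_of_gt hsx)]
        ring
      linarith
    have key : (Real.sqrt x - Real.sqrt y)^2 ≤ x * Real.log (x / y) - (x - y) := by
      have h1 : x * (2 * (1 - Real.sqrt y / Real.sqrt x)) ≤ x * Real.log (x / y) := by
        rw [hlog]
        apply mul_le_mul_of_nonneg_left _ hx.le
        linarith
      have h2 : x * (2 * (1 - Real.sqrt y / Real.sqrt x))
          = 2*x - 2 * Real.sqrt x * Real.sqrt y := by
        field_simp
        nlinarith [hsx2]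
      nlinarith [hsx2, hsy2]
    have h4 : (0:ℝ) < 4 * (x + y) := by linarith
    rw [div_le_iff₀ h4]
    have hxy : (x - y)^2 = (Real.sqrt x - Real.sqrt y)^2 * (Real.sqrt x + Real.sqrt y)^2 := by
      rw [← mul_pow]
      rw [show (Real.sqrt x - Real.sqrt y) * (Real.sqrt x + Real.sqrt y)
        = Real.sqrt x ^2 - Real.sqrt y ^2 by ring, hsx2, hsy2]
    have hsum : (Real.sqrt x + Real.sqrt y)^2 ≤ 4 * (x + y) := by
      nlinarith [sq_nonneg (Real.sqrt x - Real.sqrt y), hsx2, hsy2]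
    calc (x - y)^2 = (Real.sqrt x - Real.sqrt y)^2 * (Real.sqrt x + Real.sqrt y)^2 := hxy
      _ ≤ (x * Real.log (x / y) - (x - y)) * (4 * (x + y)) :=
          mul_le_mul key hsum (sq_nonneg _) (le_trans (sq_nonneg _) key)

theorem stmt_3 (C : ℕ) (hC : 0 < C) (p q : Fin C → ℝ)
    (hp0 : ∀ y, 0 ≤ p y) (hq0 : ∀ y, 0 ≤ q y)
    (hp1 : ∑ y, p y = 1) (hq1 : ∑ y, q y = 1)
    (habs : ∀ y, 0 < p y → 0 < q y) :
    (1 / 2) * ∑ y, |p y - q y| ≤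
      Real.sqrt (2 * ∑ y, p y * Real.log (p y / q y)) := by
  set K := ∑ y, p y * Real.log (p y / q y) with hK
  set B := ∑ y, (p y - q y)^2 / (4 * (p y + q y)) with hB
  have hBK : B ≤ K := by
    have hKeq : K = ∑ y, (p y * Real.log (p y / q y) - (p y - q y)) := by
      rw [Finset.sum_sub_distrib, Finset.sum_sub_distrib, hp1, hq1]
      simp [hK]
    rw [hKeq, hB]
    exact Finset.sum_le_sum fun y _ => ptwise (p y) (q y) (hp0 y) (hq0 y) (habs y)
  have hB0 : 0 ≤ B := Finset.sum_nonneg fun y _ =>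
    div_nonneg (sq_nonneg _) (by have := hp0 y; have := hq0 y; linarith)
  have hK0 : 0 ≤ K := le_trans hB0 hBK
  -- Cauchy-Schwarz
  have hCS : (∑ y, |p y - q y|)^2 ≤ (∑ y, (4 * (p y + q y))) * B := by
    refine Finset.sum_sq_le_sum_mul_sum_of_sq_eq_mul Finset.univ
      (f := fun y => 4 * (p y + q y)) (g := fun y => (p y - q y)^2 / (4 * (p y + q y)))
      (fun y _ => show (0:ℝ) ≤ 4 * (p y + q y) by
        have := hp0 y; have := hq0 y; linarith)
      (fun y _ => show (0:ℝ) ≤ (p y - q y)^2 / (4 * (p y + q y)) from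
        div_nonneg (sq_nonneg _) (by have := hp0 y; have := hq0 y; linarith))
      (fun y _ => ?_)
    show |p y - q y| ^ 2 = 4 * (p y + q y) * ((p y - q y)^2 / (4 * (p y + q y)))
    rcases eq_or_lt_of_le (by have := hp0 y; have := hq0 y; linarith :
        (0:ℝ) ≤ 4 * (p y + q y)) with h0 | h0
    · have hp : p y = 0 := by have := hp0 y; have := hq0 y; linarith
      have hq : q y = 0 := by have := hp0 y; have := hq0 y; linarith
      simp [hp, hq]
    · rw [sq_abs, mul_div_cancel₀ _ (ne_of_gt h0)]
  have hsum8 : (∑ y : Fin C, (4 * (p y + q y))) = 8 := by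
    rw [← Finset.mul_sum, Finset.sum_add_distrib, hp1, hq1]
    norm_num
  rw [hsum8] at hCS
  have hCS2 : (∑ y, |p y - q y|)^2 ≤ 8 * K := by nlinarith
  have hS0 : 0 ≤ ∑ y, |p y - q y| := Finset.sum_nonneg fun y _ => abs_nonneg _
  have hfin : ∑ y, |p y - q y| ≤ Real.sqrt (8 * K) := by
    rw [← Real.sqrt_sq hS0]
    exact Real.sqrt_le_sqrt hCS2
  have h8 : Real.sqrt (8 * K) = 2 * Real.sqrt (2 * K) := by
    rw [show (8:ℝ) * K = 4 * (2 * K) by ring, Real.sqrt_mul (by norm_num) (2 * K),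
      show Real.sqrt 4 = 2 by rw [show (4:ℝ) = 2^2 by norm_num, Real.sqrt_sq (by norm_num)]]
  rw [h8] at hfin
  linarith
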